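/- Fix T_1 < T_2 and p_1, p_2 > 0 with p_1 + p_2 = 1, and set T_∞ = p_1 T_1 + p_2 T_2. For η > 0 let w_η be the density w associated to the rates η_1 = p_1 η and η_2 = p_2 η. Then for every continuous function φ : [T_1, T_2] → ℝ, lim_{η → ∞} ∫_{T_1}^{T_2} φ(T) w_η(T) dT = p_1 φ(T_1) + p_2 φ(T_2). That is, the measures w_η(T) dT converge weakly to p_1 δ_{T_1} + p_2 δ_{T_2} as η → ∞. -/

import Mathlib

open MeasureTheory Filter Topology Set

/-!
On `[T₁, T∞]` the density `w_η` is `p₁` times the density of `T₁ + (T∞ - T₁) B` with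
`B ∼ Beta(1, η/2)`, and on `[T∞, T₂]` it is `p₂` times the mirror image of such a density on
`[T∞, T₂]`. These densities have unit mass and, as `η → ∞`, tend to zero uniformly away from
`T₁` (resp. `T₂`), so they form approximate identities at the outer endpoints and the integral
against `φ` tends to `p₁ φ(T₁) + p₂ φ(T₂)`.
-/

lemma tendsto_mul_rpow_atTop_nhds_zero_of_lt_one {r : ℝ} (hr₀ : 0 < r) (hr₁ : r < 1) :
    Tendsto (fun s : ℝ => s * r ^ s) atTop (𝓝 0) := by
  have hlog : 0 < -Real.log r := neg_pos.2 (Real.log_neg hr₀ hr₁)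
  refine (tendsto_rpow_mul_exp_neg_mul_atTop_nhds_zero 1 _ hlog).congr fun s => ?_
  rw [Real.rpow_one, neg_neg, Real.rpow_def_of_pos hr₀, mul_comm (Real.log r)]

lemma integral_sub_rpow_sub_one (a b : ℝ) {s : ℝ} (hs : 0 < s) :
    ∫ x in a..b, (b - x) ^ (s - 1) = (b - a) ^ s / s := by
  rw [intervalIntegral.integral_comp_sub_left (fun y : ℝ => y ^ (s - 1)) b, sub_self,
    integral_rpow (Or.inl (by linarith)), sub_add_cancel, Real.zero_rpow hs.ne', sub_zero]

-- The density of `a + (b - a) B` with `B ∼ Beta(1, s)`.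
noncomputable def powerKernelLeft (a b s x : ℝ) : ℝ := s * (b - a) ^ (-s) * (b - x) ^ (s - 1)

noncomputable def powerKernelRight (a b s x : ℝ) : ℝ := s * (b - a) ^ (-s) * (x - a) ^ (s - 1)

section powerKernel

variable {a b s : ℝ}

lemma powerKernelLeft_nonneg (hs : 0 ≤ s) {x : ℝ} (hax : a ≤ x) (hxb : x ≤ b) :
    0 ≤ powerKernelLeft a b s x := by
  have : 0 ≤ b - a := by linarith
  have : 0 ≤ b - x := sub_nonneg.2 hxb
  unfold powerKernelLeft
  positivity

lemma powerKernelRight_eq_powerKernelLeft (x : ℝ) :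
    powerKernelRight a b s x = powerKernelLeft a b s (a + b - x) := by
  rw [powerKernelLeft, powerKernelRight, show b - (a + b - x) = x - a by ring]

lemma powerKernelLeft_right (hs : 1 < s) : powerKernelLeft a b s b = 0 := by
  rw [powerKernelLeft, sub_self, Real.zero_rpow (by linarith), mul_zero]

lemma powerKernelRight_left (hs : 1 < s) : powerKernelRight a b s a = 0 := by
  rw [powerKernelRight, sub_self, Real.zero_rpow (by linarith), mul_zero]

lemma continuous_powerKernelLeft (hs : 1 ≤ s) : Continuous (powerKernelLeft a b s) :=
  continuous_const.mul <| (continuous_const.sub continuous_id).rpow_const fun _ =>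
    Or.inr (sub_nonneg.2 hs)

lemma continuous_powerKernelRight (hs : 1 ≤ s) : Continuous (powerKernelRight a b s) :=
  continuous_const.mul <| (continuous_id.sub continuous_const).rpow_const fun _ =>
    Or.inr (sub_nonneg.2 hs)

lemma integral_powerKernelLeft (hab : a < b) (hs : 0 < s) :
    ∫ x in a..b, powerKernelLeft a b s x = 1 := by
  have : (b - a) ^ s ≠ 0 := (Real.rpow_pos_of_pos (sub_pos.2 hab) s).ne'
  simp only [powerKernelLeft]
  rw [intervalIntegral.integral_const_mul, integral_sub_rpow_sub_one a b hs,
    Real.rpow_neg (sub_pos.2 hab).le]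
  field_simp

lemma tendstoUniformlyOn_powerKernelLeft {ε : ℝ} (hε : 0 < ε) (hεb : ε < b - a) :
    TendstoUniformlyOn (powerKernelLeft a b) 0 atTop (Icc (a + ε) b) := by
  set c := b - a - ε
  have hc : 0 < c := by linarith
  have hca : c < b - a := by linarith
  have hbound : Tendsto (fun s => powerKernelLeft a b s (a + ε)) atTop (𝓝 0) := by
    have := (tendsto_mul_rpow_atTop_nhds_zero_of_lt_one (div_pos hc (hc.trans hca))
      ((div_lt_one (hc.trans hca)).2 hca)).const_mul c⁻¹
    rw [mul_zero] at this
    refine this.congr fun s => ?_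
    rw [powerKernelLeft, show b - (a + ε) = c by ring, Real.div_rpow hc.le (hc.trans hca).le,
      Real.rpow_sub hc, Real.rpow_one, Real.rpow_neg (hc.trans hca).le]
    field_simp
  rw [Metric.tendstoUniformlyOn_iff]
  intro δ hδ
  filter_upwards [hbound.eventually (gt_mem_nhds hδ), eventually_ge_atTop 1] with s hs hs₁ x hx
  have hax : a ≤ x := by linarith [hx.1]
  have hmono : powerKernelLeft a b s x ≤ powerKernelLeft a b s (a + ε) :=
    mul_le_mul_of_nonneg_left
      (Real.rpow_le_rpow (sub_nonneg.2 hx.2) (by linarith [hx.1]) (by linarith))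
      (mul_nonneg (by linarith) (Real.rpow_nonneg (by linarith) _))
  rw [Pi.zero_apply, dist_zero_left, Real.norm_of_nonneg
    (powerKernelLeft_nonneg (by linarith) hax hx.2)]
  exact hmono.trans_lt hs

lemma tendsto_integral_powerKernelLeft_mul (hab : a < b) {g : ℝ → ℝ}
    (hg : ContinuousOn g (Icc a b)) :
    Tendsto (fun s => ∫ x in a..b, powerKernelLeft a b s x * g x) atTop (𝓝 (g a)) := by
  simp only [intervalIntegral.integral_of_le hab.le, ← integral_Icc_eq_integral_Ioc,
    ← smul_eq_mul]
  refine tendsto_setIntegral_peak_smul_of_integrableOn_of_tendsto measurableSet_Icc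
    measurableSet_Icc subset_rfl self_mem_nhdsWithin measure_Icc_lt_top.ne ?_ ?_ ?_ ?_
    hg.integrableOn_Icc (hg a (left_mem_Icc.2 hab.le))
  · filter_upwards [eventually_ge_atTop 0] with s hs x hx
    exact powerKernelLeft_nonneg hs hx.1 hx.2
  · intro u hu hau
    obtain ⟨δ, hδ, hball⟩ := Metric.isOpen_iff.1 hu a hau
    set ε := min δ ((b - a) / 2)
    have hε : 0 < ε := lt_min hδ (by linarith)
    have hεb : ε < b - a := (min_le_right _ _).trans_lt (by linarith)
    refine (tendstoUniformlyOn_powerKernelLeft hε hεb).mono fun x ⟨hx, hxu⟩ => ⟨?_, hx.2⟩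
    have : δ ≤ dist x a := not_lt.1 fun h => hxu (hball h)
    rw [Real.dist_eq, abs_of_nonneg (sub_nonneg.2 hx.1)] at this
    linarith [min_le_left δ ((b - a) / 2)]
  · refine tendsto_const_nhds.congr' ?_
    filter_upwards [eventually_gt_atTop 0] with s hs
    rw [integral_Icc_eq_integral_Ioc, ← intervalIntegral.integral_of_le hab.le,
      integral_powerKernelLeft hab hs]
  · filter_upwards [eventually_ge_atTop 1] with s hs
    exact (continuous_powerKernelLeft hs).aestronglyMeasurable

lemma tendsto_integral_powerKernelRight_mul (hab : a < b) {g : ℝ → ℝ}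
    (hg : ContinuousOn g (Icc a b)) :
    Tendsto (fun s => ∫ x in a..b, powerKernelRight a b s x * g x) atTop (𝓝 (g b)) := by
  have hreflect : MapsTo (fun x => a + b - x) (Icc a b) (Icc a b) :=
    fun x hx => ⟨by linarith [hx.2], by linarith [hx.1]⟩
  have := tendsto_integral_powerKernelLeft_mul hab (hg.comp (by fun_prop) hreflect)
  rw [Function.comp_apply, add_sub_cancel_left] at this
  refine this.congr fun s => ?_
  simp only [powerKernelRight_eq_powerKernelLeft]
  have := intervalIntegral.integral_comp_sub_left (a := a) (b := b)
    (fun x => powerKernelLeft a b s x * g (a + b - x)) (a + b)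
  simp only [sub_sub_cancel, add_sub_cancel_left, add_sub_cancel_right] at this
  exact this.symm

end powerKernel

/-- The temperature density `w` of Theorem 2.2 (steady state formula). -/
noncomputable def wdens (η₁ η₂ T₁ T₂ : ℝ) (T : ℝ) : ℝ :=
  if T < (η₁ * T₁ + η₂ * T₂) / (η₁ + η₂) then
    (η₁ / 2) * ((η₁ * T₁ + η₂ * T₂) / (η₁ + η₂) - T₁) ^ (-(η₁ + η₂) / 2) *
      ((η₁ * T₁ + η₂ * T₂) / (η₁ + η₂) - T) ^ ((η₁ + η₂) / 2 - 1)
  else if T = (η₁ * T₁ + η₂ * T₂) / (η₁ + η₂) then 0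
  else
    (η₂ / 2) * (T₂ - (η₁ * T₁ + η₂ * T₂) / (η₁ + η₂)) ^ (-(η₁ + η₂) / 2) *
      (T - (η₁ * T₁ + η₂ * T₂) / (η₁ + η₂)) ^ ((η₁ + η₂) / 2 - 1)

section wdens

variable {T₁ T₂ p₁ p₂ m η : ℝ}

lemma wdens_scaled_eq (hp : p₁ + p₂ = 1) (hm : p₁ * T₁ + p₂ * T₂ = m) (hη : η ≠ 0) (T : ℝ) :
    wdens (p₁ * η) (p₂ * η) T₁ T₂ T =
      if T < m then p₁ * powerKernelLeft T₁ m (η / 2) T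
      else if T = m then 0 else p₂ * powerKernelRight m T₂ (η / 2) T := by
  have hsum : p₁ * η + p₂ * η = η := by rw [← add_mul, hp, one_mul]
  have hmean : (p₁ * η * T₁ + p₂ * η * T₂) / η = m := by
    rw [← hm]
    field_simp
  simp only [wdens, hsum, hmean, powerKernelLeft, powerKernelRight, neg_div]
  split_ifs <;> ring

lemma wdens_scaled_eqOn_left (hp : p₁ + p₂ = 1) (hm : p₁ * T₁ + p₂ * T₂ = m) (hη : 2 < η) :
    EqOn (wdens (p₁ * η) (p₂ * η) T₁ T₂) (fun T => p₁ * powerKernelLeft T₁ m (η / 2) T)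
      (Iic m) := by
  intro T hT
  dsimp only
  rw [wdens_scaled_eq hp hm (by linarith)]
  rcases (mem_Iic.1 hT).lt_or_eq with hlt | rfl
  · rw [if_pos hlt]
  · rw [if_neg (lt_irrefl _), if_pos rfl, powerKernelLeft_right (by linarith : 1 < η / 2),
      mul_zero]

lemma wdens_scaled_eqOn_right (hp : p₁ + p₂ = 1) (hm : p₁ * T₁ + p₂ * T₂ = m) (hη : 2 < η) :
    EqOn (wdens (p₁ * η) (p₂ * η) T₁ T₂) (fun T => p₂ * powerKernelRight m T₂ (η / 2) T)
      (Ici m) := by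
  intro T hT
  dsimp only
  rw [wdens_scaled_eq hp hm (by linarith)]
  rcases (mem_Ici.1 hT).lt_or_eq with hlt | rfl
  · rw [if_neg hlt.not_gt, if_neg hlt.ne']
  · rw [if_neg (lt_irrefl _), if_pos rfl, powerKernelRight_left (by linarith : 1 < η / 2),
      mul_zero]

lemma integral_mul_wdens_scaled (hp : p₁ + p₂ = 1) (hm : p₁ * T₁ + p₂ * T₂ = m) (hη : 2 < η)
    (h₁ : T₁ ≤ m) (h₂ : m ≤ T₂) {φ : ℝ → ℝ} (hφ : ContinuousOn φ (Icc T₁ T₂)) :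
    ∫ T in T₁..T₂, φ T * wdens (p₁ * η) (p₂ * η) T₁ T₂ T =
      (p₁ * ∫ T in T₁..m, powerKernelLeft T₁ m (η / 2) T * φ T) +
        p₂ * ∫ T in m..T₂, powerKernelRight m T₂ (η / 2) T * φ T := by
  have hs : 1 ≤ η / 2 := by linarith
  have eqL : EqOn (fun T => φ T * wdens (p₁ * η) (p₂ * η) T₁ T₂ T)
      (fun T => p₁ * (powerKernelLeft T₁ m (η / 2) T * φ T)) (uIcc T₁ m) := fun T hT => by
    dsimp only
    rw [wdens_scaled_eqOn_left hp hm hη (uIcc_of_le h₁ ▸ hT).2]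
    ring
  have eqR : EqOn (fun T => φ T * wdens (p₁ * η) (p₂ * η) T₁ T₂ T)
      (fun T => p₂ * (powerKernelRight m T₂ (η / 2) T * φ T)) (uIcc m T₂) := fun T hT => by
    dsimp only
    rw [wdens_scaled_eqOn_right hp hm hη (uIcc_of_le h₂ ▸ hT).1]
    ring
  have intL : IntervalIntegrable (fun T => φ T * wdens (p₁ * η) (p₂ * η) T₁ T₂ T) volume T₁ m :=
    (ContinuousOn.congr (continuousOn_const.mul ((continuous_powerKernelLeft hs).continuousOn.mul
      (hφ.mono (uIcc_of_le h₁ ▸ Icc_subset_Icc_right h₂)))) eqL).intervalIntegrable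
  have intR : IntervalIntegrable (fun T => φ T * wdens (p₁ * η) (p₂ * η) T₁ T₂ T) volume m T₂ :=
    (ContinuousOn.congr (continuousOn_const.mul ((continuous_powerKernelRight hs).continuousOn.mul
      (hφ.mono (uIcc_of_le h₂ ▸ Icc_subset_Icc_left h₁)))) eqR).intervalIntegrable
  rw [← intervalIntegral.integral_add_adjacent_intervals intL intR,
    intervalIntegral.integral_congr eqL, intervalIntegral.integral_congr eqR,
    intervalIntegral.integral_const_mul, intervalIntegral.integral_const_mul]

end wdens

/-- As `η → ∞` (with the proportions `p₁, p₂` fixed), the measures `w_η(T) dT`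
converge weakly to `p₁ δ_{T₁} + p₂ δ_{T₂}`. -/
theorem wdens_weak_limit_infty
    (T₁ T₂ : ℝ) (hT₁₂ : T₁ < T₂)
    (p₁ p₂ : ℝ) (hp₁ : 0 < p₁) (hp₂ : 0 < p₂) (hp : p₁ + p₂ = 1)
    (φ : ℝ → ℝ) (hφ : ContinuousOn φ (Set.Icc T₁ T₂)) :
    Tendsto (fun η : ℝ => ∫ T in T₁..T₂, φ T * wdens (p₁ * η) (p₂ * η) T₁ T₂ T)
      atTop (nhds (p₁ * φ T₁ + p₂ * φ T₂)) := by
  set m := p₁ * T₁ + p₂ * T₂ with hm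
  have h₁ : T₁ < m := by linear_combination mul_pos hp₂ (sub_pos.2 hT₁₂) - T₁ * hp
  have h₂ : m < T₂ := by linear_combination mul_pos hp₁ (sub_pos.2 hT₁₂) + T₂ * hp
  have hL := tendsto_integral_powerKernelLeft_mul h₁ (hφ.mono (Icc_subset_Icc_right h₂.le))
  have hR := tendsto_integral_powerKernelRight_mul h₂ (hφ.mono (Icc_subset_Icc_left h₁.le))
  have hhalf : Tendsto (fun η : ℝ => η / 2) atTop atTop := tendsto_id.atTop_div_const two_pos
  refine (((hL.const_mul p₁).add (hR.const_mul p₂)).comp hhalf).congr' ?_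
  filter_upwards [eventually_gt_atTop 2] with η hη
  exact (integral_mul_wdens_scaled hp hm.symm hη h₁.le h₂.le hφ).symm
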